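/- arXiv:1804.10612 — 3 statements merged into one kernel-verified Lean document; each statement's English description precedes it below -/
import Mathlib

section
/- If the shared state is separable, i.e. ρ^{AB} = Σ_λ p_λ ρ^A_λ ⊗ ρ^B_λ with p_λ ≥ 0 and ρ^A_λ, ρ^B_λ states, then every channel operator is separable: M̃_a^{VB} = Σ_λ p_λ M^V_{a|λ} ⊗ ρ^B_λ, where M^V_{a|λ} = tr_A[M_a^{VA}(1_V ⊗ ρ^A_λ)] is positive semidefinite for every a and λ. -/
/-!
The channel operator `chanOp M ρ` is linear in `ρ` and sends `τ ⊗ χ` to `margOp M τ ⊗ χ`, so a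
separable decomposition of `ρ` passes through term by term. For positivity write `τ = Sᴴ S`;
since `1 ⊗ S` can be cycled inside the partial trace over `A`, `margOp M τ` is the partial trace
of `(1 ⊗ S) M (1 ⊗ S)ᴴ ≥ 0`, and a partial trace of a positive semidefinite matrix is a sum of
principal submatrices, hence positive semidefinite.
-/

open Matrix ComplexOrder
open scoped Kronecker

namespace Tele

noncomputable def ptrace₁ {V B : Type*} [Fintype V]
    (M : Matrix (V × B) (V × B) ℂ) : Matrix B B ℂ :=
  Matrix.of fun b b' => ∑ v, M (v, b) (v, b')

noncomputable def ptrace₂ {V B : Type*} [Fintype B]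
    (M : Matrix (V × B) (V × B) ℂ) : Matrix V V ℂ :=
  Matrix.of fun v v' => ∑ b, M (v, b) (v', b)

noncomputable def ptraceMid {V A B : Type*} [Fintype A]
    (M : Matrix (V × A × B) (V × A × B) ℂ) : Matrix (V × B) (V × B) ℂ :=
  Matrix.of fun p q => ∑ a, M (p.1, a, p.2) (q.1, a, q.2)

noncomputable def ptraceVA {V A B : Type*} [Fintype V] [Fintype A]
    (M : Matrix (V × A × B) (V × A × B) ℂ) : Matrix B B ℂ :=
  Matrix.of fun b b' => ∑ v, ∑ a, M (v, a, b) (v, a, b')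

noncomputable def ptraceV₁A {V V₁ A B : Type*} [Fintype V₁] [Fintype A]
    (M : Matrix (V × V₁ × A × B) (V × V₁ × A × B) ℂ) : Matrix (V × B) (V × B) ℂ :=
  Matrix.of fun p q => ∑ v₁, ∑ a, M (p.1, v₁, a, p.2) (q.1, v₁, a, q.2)

def ptranspose₁ {V B : Type*} (M : Matrix (V × B) (V × B) ℂ) : Matrix (V × B) (V × B) ℂ :=
  Matrix.of fun p q => M (q.1, p.2) (p.1, q.2)

def ptranspose₂ {V B : Type*} (M : Matrix (V × B) (V × B) ℂ) : Matrix (V × B) (V × B) ℂ :=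
  Matrix.of fun p q => M (p.1, q.2) (q.1, p.2)

def Separable {V B : Type*} [Fintype V] [Fintype B]
    (M : Matrix (V × B) (V × B) ℂ) : Prop :=
  ∃ (n : ℕ) (τ : Fin n → Matrix V V ℂ) (χ : Fin n → Matrix B B ℂ),
    (∀ i, (τ i).PosSemidef) ∧ (∀ i, (χ i).PosSemidef) ∧ M = ∑ i, τ i ⊗ₖ χ i

def IsState {V : Type*} [Fintype V] (ρ : Matrix V V ℂ) : Prop :=
  ρ.PosSemidef ∧ ρ.trace = 1

noncomputable def maxEnt (d : ℕ) : Matrix (Fin d × Fin d) (Fin d × Fin d) ℂ :=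
  Matrix.of fun p q => if p.1 = p.2 ∧ q.1 = q.2 then (d : ℂ)⁻¹ else 0

noncomputable def chanOp {V A B : Type*} [Fintype V] [Fintype A] [Fintype B]
    [DecidableEq V] [DecidableEq B]
    (M : Matrix (V × A) (V × A) ℂ) (ρ : Matrix (A × B) (A × B) ℂ) :
    Matrix (V × B) (V × B) ℂ :=
  ptraceMid ((Matrix.reindex (Equiv.prodAssoc V A B) (Equiv.prodAssoc V A B)
      (M ⊗ₖ (1 : Matrix B B ℂ))) * ((1 : Matrix V V ℂ) ⊗ₖ ρ))

noncomputable def teleA {V A B : Type*} [Fintype V] [Fintype A] [Fintype B] [DecidableEq B]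
    (M : Matrix (V × A) (V × A) ℂ) (ρ : Matrix (A × B) (A × B) ℂ) (ω : Matrix V V ℂ) :
    Matrix B B ℂ :=
  ptraceVA ((Matrix.reindex (Equiv.prodAssoc V A B) (Equiv.prodAssoc V A B)
      (M ⊗ₖ (1 : Matrix B B ℂ))) * (ω ⊗ₖ ρ))

noncomputable def margOp {V A : Type*} [Fintype V] [Fintype A] [DecidableEq V]
    (M : Matrix (V × A) (V × A) ℂ) (ρA : Matrix A A ℂ) : Matrix V V ℂ :=
  ptrace₂ (M * ((1 : Matrix V V ℂ) ⊗ₖ ρA))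

noncomputable def piOp {A B : Type*} [Fintype A] [Fintype B] [DecidableEq B]
    (χ : Matrix A A ℂ) (ρ : Matrix (A × B) (A × B) ℂ) : Matrix B B ℂ :=
  ptrace₁ ((χ ⊗ₖ (1 : Matrix B B ℂ)) * ρ)

def TomoComplete {V X : Type*} [Fintype V] (ω : X → Matrix V V ℂ) : Prop :=
  ∀ H : Matrix V V ℂ, H.IsHermitian → H ∈ Submodule.span ℝ (Set.range ω)

noncomputable def shiftX (d : ℕ) : Matrix (Fin d) (Fin d) ℂ :=
  Matrix.of fun i j => if (i : ℕ) = ((j : ℕ) + 1) % d then 1 else 0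

noncomputable def clockZ (d : ℕ) : Matrix (Fin d) (Fin d) ℂ :=
  Matrix.of fun i j =>
    if i = j then Complex.exp (2 * (Real.pi : ℂ) * Complex.I * ((i : ℕ) : ℂ) / (d : ℂ)) else 0

noncomputable def HW (d : ℕ) (a : Fin d × Fin d) : Matrix (Fin d) (Fin d) ℂ :=
  shiftX d ^ (a.1 : ℕ) * clockZ d ^ (a.2 : ℕ)

noncomputable def bellPOVM (d : ℕ) (a : Fin d × Fin d) :
    Matrix (Fin d × Fin d) (Fin d × Fin d) ℂ :=
  (HW d a ⊗ₖ (1 : Matrix (Fin d) (Fin d) ℂ)) * maxEnt d *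
    ((HW d a)ᴴ ⊗ₖ (1 : Matrix (Fin d) (Fin d) ℂ))

noncomputable def negativity {A B : Type*} [Fintype A] [Fintype B]
    (ρ : Matrix (A × B) (A × B) ℂ) : ℝ :=
  sInf {t : ℝ | ∃ ρp ρm : Matrix (A × B) (A × B) ℂ,
    ρ = ρp - ρm ∧ (ptranspose₁ ρp).PosSemidef ∧ (ptranspose₁ ρm).PosSemidef ∧
    t = (ρm.trace).re}

noncomputable def epsGen {A B : Type*} [Fintype A] [Fintype B]
    (ρ : Matrix (A × B) (A × B) ℂ) : ℝ :=
  sInf {r : ℝ | 0 ≤ r ∧ ∃ ρs : Matrix (A × B) (A × B) ℂ, IsState ρs ∧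
    Separable ((((1 + r : ℝ) : ℂ))⁻¹ • (ρ + ((r : ℝ) : ℂ) • ρs))}

noncomputable def epsSep {A B : Type*} [Fintype A] [Fintype B]
    (ρ : Matrix (A × B) (A × B) ℂ) : ℝ :=
  sInf {r : ℝ | 0 ≤ r ∧ ∃ ρs : Matrix (A × B) (A × B) ℂ, IsState ρs ∧ Separable ρs ∧
    Separable ((((1 + r : ℝ) : ℂ))⁻¹ • (ρ + ((r : ℝ) : ℂ) • ρs))}

noncomputable def epsR {A B : Type*} [Fintype A] [Fintype B] [DecidableEq A] [DecidableEq B]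
    (ρ : Matrix (A × B) (A × B) ℂ) : ℝ :=
  sInf {r : ℝ | 0 ≤ r ∧
    Separable ((((1 + r : ℝ) : ℂ))⁻¹ •
      (ρ + ((r : ℝ) : ℂ) • ((Fintype.card (A × B) : ℂ)⁻¹ • (1 : Matrix (A × B) (A × B) ℂ))))}

noncomputable def epsBSA {A B : Type*} [Fintype A] [Fintype B]
    (ρ : Matrix (A × B) (A × B) ℂ) : ℝ :=
  sInf {p : ℝ | 0 ≤ p ∧ p ≤ 1 ∧ ∃ ρs σS : Matrix (A × B) (A × B) ℂ,
    IsState ρs ∧ IsState σS ∧ Separable σS ∧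
    ρ = ((p : ℝ) : ℂ) • ρs + (((1 - p : ℝ)) : ℂ) • σS}

noncomputable def tauGen {V B X ι : Type*} [Fintype V] [Fintype B] [Fintype ι]
    [DecidableEq V] [DecidableEq B]
    (ω : X → Matrix V V ℂ) (σ : ι → X → Matrix B B ℂ) : ℝ :=
  sInf {r : ℝ | 0 ≤ r ∧ ∃ (m : ℕ) (ρs : Matrix (Fin m × B) (Fin m × B) ℂ)
      (N : ι → Matrix (V × Fin m) (V × Fin m) ℂ) (Ms : ι → Matrix (V × B) (V × B) ℂ),
      IsState ρs ∧ (∀ a, (N a).PosSemidef) ∧ ((∑ a, N a) = 1) ∧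
      (∀ a, (Ms a).PosSemidef ∧ Separable (Ms a)) ∧
      (∀ a x, (((1 + r : ℝ) : ℂ))⁻¹ • (σ a x + ((r : ℝ) : ℂ) • teleA (N a) ρs (ω x)) =
        ptrace₁ (Ms a * (ω x ⊗ₖ (1 : Matrix B B ℂ)))) ∧
      (∀ x, (∑ a, Ms a) = (1 : Matrix V V ℂ) ⊗ₖ
        ((((1 + r : ℝ) : ℂ))⁻¹ •
          ((∑ a, σ a x) + ((r : ℝ) : ℂ) • ∑ a, teleA (N a) ρs (ω x))))}

noncomputable def tauCl {V B X ι : Type*} [Fintype V] [Fintype B] [Fintype ι]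
    [DecidableEq V] [DecidableEq B]
    (ω : X → Matrix V V ℂ) (σ : ι → X → Matrix B B ℂ) : ℝ :=
  sInf {r : ℝ | 0 ≤ r ∧ ∃ (Mb Ms : ι → Matrix (V × B) (V × B) ℂ),
    (∀ a, (Mb a).PosSemidef ∧ Separable (Mb a)) ∧
    (∀ a, (Ms a).PosSemidef ∧ Separable (Ms a)) ∧
    (∀ x, (∑ a, Mb a) = (1 : Matrix V V ℂ) ⊗ₖ
      (∑ a, ptrace₁ (Mb a * (ω x ⊗ₖ (1 : Matrix B B ℂ))))) ∧
    (∀ a x, (((1 + r : ℝ) : ℂ))⁻¹ •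
        (σ a x + ((r : ℝ) : ℂ) • ptrace₁ (Mb a * (ω x ⊗ₖ (1 : Matrix B B ℂ)))) =
      ptrace₁ (Ms a * (ω x ⊗ₖ (1 : Matrix B B ℂ)))) ∧
    (∀ x, (∑ a, Ms a) = (1 : Matrix V V ℂ) ⊗ₖ
      ((((1 + r : ℝ) : ℂ))⁻¹ •
        ((∑ a, σ a x) + ((r : ℝ) : ℂ) •
          ∑ a, ptrace₁ (Mb a * (ω x ⊗ₖ (1 : Matrix B B ℂ))))))}

noncomputable def tauR {V B X ι : Type*} [Fintype V] [Fintype B] [Fintype ι]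
    [DecidableEq V] [DecidableEq B]
    (ω : X → Matrix V V ℂ) (σ : ι → X → Matrix B B ℂ) : ℝ :=
  sInf {r : ℝ | 0 ≤ r ∧ ∃ (p : ι → ℝ) (Ms : ι → Matrix (V × B) (V × B) ℂ),
    (∀ a, 0 ≤ p a) ∧ ((∑ a, p a) = 1) ∧
    (∀ a, (Ms a).PosSemidef ∧ Separable (Ms a)) ∧
    (∀ a x, (((1 + r : ℝ) : ℂ))⁻¹ •
        (σ a x + ((r * p a : ℝ) : ℂ) • ((Fintype.card B : ℂ)⁻¹ • (1 : Matrix B B ℂ))) =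
      ptrace₁ (Ms a * (ω x ⊗ₖ (1 : Matrix B B ℂ)))) ∧
    (∀ x, (∑ a, Ms a) = (1 : Matrix V V ℂ) ⊗ₖ
      ((((1 + r : ℝ) : ℂ))⁻¹ •
        ((∑ a, σ a x) + ((r : ℝ) : ℂ) • ((Fintype.card B : ℂ)⁻¹ • (1 : Matrix B B ℂ)))))}

noncomputable def TW {V B X ι : Type*} [Fintype V] [Fintype B] [Fintype ι]
    [DecidableEq B]
    (ω : X → Matrix V V ℂ) (σ : ι → X → Matrix B B ℂ) : ℝ :=
  sInf {p : ℝ | 0 ≤ p ∧ p ≤ 1 ∧ ∃ (Mt Mb : ι → Matrix (V × B) (V × B) ℂ),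
    (∀ a, (Mb a).PosSemidef ∧ Separable (Mb a)) ∧
    (∀ a, (ptranspose₁ (Mt a)).PosSemidef) ∧
    (∀ x x', (∑ a, ptrace₁ (Mt a * (ω x ⊗ₖ (1 : Matrix B B ℂ)))) =
      ∑ a, ptrace₁ (Mt a * (ω x' ⊗ₖ (1 : Matrix B B ℂ)))) ∧
    (∀ a x, σ a x = ptrace₁
      ((((p : ℝ) : ℂ) • Mt a + (((1 - p : ℝ)) : ℂ) • Mb a) * (ω x ⊗ₖ (1 : Matrix B B ℂ))))}

section PartialTrace

variable {V A : Type*} [Fintype A]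

lemma ptrace₂_eq_sum_submatrix (N : Matrix (V × A) (V × A) ℂ) :
    ptrace₂ N = ∑ a, N.submatrix (·, a) (·, a) := by
  ext v v'
  simp [ptrace₂, Matrix.sum_apply]

lemma posSemidef_ptrace₂ {N : Matrix (V × A) (V × A) ℂ} (hN : N.PosSemidef) :
    (ptrace₂ N).PosSemidef := by
  rw [ptrace₂_eq_sum_submatrix]
  exact posSemidef_sum _ fun a _ => hN.submatrix _

lemma ptrace₂_mul_one_kronecker [Fintype V] [DecidableEq V]
    (X : Matrix (V × A) (V × A) ℂ) (S : Matrix A A ℂ) :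
    ptrace₂ (X * ((1 : Matrix V V ℂ) ⊗ₖ S)) = ptrace₂ (((1 : Matrix V V ℂ) ⊗ₖ S) * X) := by
  ext v v'
  simp only [ptrace₂, of_apply, mul_apply, Fintype.sum_prod_type, kroneckerMap_apply,
    one_apply, ite_mul, mul_ite, one_mul, zero_mul, mul_zero]
  simp only [Finset.sum_comm (γ := V), Finset.sum_ite_eq, Finset.sum_ite_eq', Finset.mem_univ,
    if_true]
  rw [Finset.sum_comm]
  exact Finset.sum_congr rfl fun _ _ => Finset.sum_congr rfl fun _ _ => mul_comm _ _

end PartialTrace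

section ChannelOperators

variable {V A B : Type*} [Fintype V] [Fintype A] [Fintype B] [DecidableEq V]

lemma margOp_conjTranspose_mul_self (M : Matrix (V × A) (V × A) ℂ) (S : Matrix A A ℂ) :
    margOp M (Sᴴ * S) =
      ptrace₂ (((1 : Matrix V V ℂ) ⊗ₖ S) * M * ((1 : Matrix V V ℂ) ⊗ₖ S)ᴴ) := by
  rw [margOp, ← one_mul (1 : Matrix V V ℂ), mul_kronecker_mul, mul_one, ← mul_assoc,
    ptrace₂_mul_one_kronecker, ← mul_assoc, conjTranspose_kronecker, conjTranspose_one]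

open scoped MatrixOrder in
lemma posSemidef_margOp {M : Matrix (V × A) (V × A) ℂ} (hM : M.PosSemidef)
    {τ : Matrix A A ℂ} (hτ : τ.PosSemidef) : (margOp M τ).PosSemidef := by
  classical
  obtain ⟨S, rfl⟩ := CStarAlgebra.nonneg_iff_eq_star_mul_self.mp hτ.nonneg
  rw [star_eq_conjTranspose, margOp_conjTranspose_mul_self]
  exact posSemidef_ptrace₂ (hM.mul_mul_conjTranspose_same _)

lemma chanOp_apply [DecidableEq B] (M : Matrix (V × A) (V × A) ℂ)
    (ρ : Matrix (A × B) (A × B) ℂ) (v v' : V) (b b' : B) :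
    chanOp M ρ (v, b) (v', b') = ∑ a, ∑ a', M (v, a) (v', a') * ρ (a', b) (a, b') := by
  simp [chanOp, ptraceMid, mul_apply, Equiv.prodAssoc, kroneckerMap_apply, one_apply,
    Fintype.sum_prod_type]

lemma margOp_apply (M : Matrix (V × A) (V × A) ℂ) (τ : Matrix A A ℂ) (v v' : V) :
    margOp M τ v v' = ∑ a, ∑ a', M (v, a) (v', a') * τ a' a := by
  simp [margOp, ptrace₂, mul_apply, kroneckerMap_apply, one_apply, Fintype.sum_prod_type]

variable [DecidableEq B]

lemma chanOp_kronecker (M : Matrix (V × A) (V × A) ℂ) (τ : Matrix A A ℂ) (χ : Matrix B B ℂ) :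
    chanOp M (τ ⊗ₖ χ) = margOp M τ ⊗ₖ χ := by
  ext ⟨v, b⟩ ⟨v', b'⟩
  simp only [chanOp_apply, margOp_apply, kroneckerMap_apply, Finset.sum_mul, mul_assoc]

@[simps]
noncomputable def chanOpLinearMap (M : Matrix (V × A) (V × A) ℂ) :
    Matrix (A × B) (A × B) ℂ →ₗ[ℂ] Matrix (V × B) (V × B) ℂ where
  toFun := chanOp M
  map_add' ρ ρ' := by
    ext ⟨v, b⟩ ⟨v', b'⟩
    simp only [chanOp_apply, Matrix.add_apply, mul_add, Finset.sum_add_distrib]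
  map_smul' c ρ := by
    ext ⟨v, b⟩ ⟨v', b'⟩
    simp only [chanOp_apply, Matrix.smul_apply, smul_eq_mul, RingHom.id_apply, Finset.mul_sum,
      mul_left_comm]

end ChannelOperators

theorem separable_state_channel_operators_general {V A B ι Λ : Type*}
    [Fintype V] [Fintype A] [Fintype B] [Fintype Λ]
    [DecidableEq V] [DecidableEq B]
    (ρ : Matrix (A × B) (A × B) ℂ)
    (p : Λ → ℝ)
    (ρA : Λ → Matrix A A ℂ) (ρB : Λ → Matrix B B ℂ)
    (hρA : ∀ l, IsState (ρA l))
    (hsep : ρ = ∑ l, ((p l : ℝ) : ℂ) • (ρA l ⊗ₖ ρB l))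
    (M : ι → Matrix (V × A) (V × A) ℂ)
    (hM : ∀ a, (M a).PosSemidef) :
    (∀ a, chanOp (M a) ρ = ∑ l, ((p l : ℝ) : ℂ) • (margOp (M a) (ρA l) ⊗ₖ ρB l)) ∧
      (∀ a l, (margOp (M a) (ρA l)).PosSemidef) := by
  refine ⟨fun a => ?_, fun a l => posSemidef_margOp (hM a) (hρA l).1⟩
  change chanOpLinearMap (M a) ρ = _
  simp only [hsep, map_sum, map_smul, chanOpLinearMap_apply, chanOp_kronecker]

/-- a separable shared state yields separable channel operators of the
explicit form `Σ_λ p_λ M_{a|λ} ⊗ ρ^B_λ`, with each `M_{a|λ}` positive semidefinite. -/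
theorem separable_state_channel_operators {V A B ι Λ : Type*}
    [Fintype V] [Fintype A] [Fintype B] [Fintype ι] [Fintype Λ]
    [DecidableEq V] [DecidableEq A] [DecidableEq B]
    (ρ : Matrix (A × B) (A × B) ℂ) (hρ : IsState ρ)
    (p : Λ → ℝ) (hp : ∀ l, 0 ≤ p l)
    (ρA : Λ → Matrix A A ℂ) (ρB : Λ → Matrix B B ℂ)
    (hρA : ∀ l, IsState (ρA l)) (hρB : ∀ l, IsState (ρB l))
    (hsep : ρ = ∑ l, ((p l : ℝ) : ℂ) • (ρA l ⊗ₖ ρB l))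
    (M : ι → Matrix (V × A) (V × A) ℂ)
    (hM : ∀ a, (M a).PosSemidef) (hMsum : (∑ a, M a) = 1) :
    (∀ a, chanOp (M a) ρ = ∑ l, ((p l : ℝ) : ℂ) • (margOp (M a) (ρA l) ⊗ₖ ρB l)) ∧
      (∀ a l, (margOp (M a) (ρA l)).PosSemidef) :=
  separable_state_channel_operators_general ρ p ρA ρB hρA hsep M hM

end Tele
end

section
/- (Local entanglement-swapping lemma.) Let V = C^d, let M ≥ 0 be an operator on V ⊗ H_A, let ρ be a state on H_A ⊗ H_B, and let ω be a state on V. Define p = tr[(1_V ⊗ M^{V₁A} ⊗ 1_B)(Φ+^{VV₁} ⊗ ρ^{AB})], where V₁ is a second copy of C^d, and, when p > 0, ρ' = (1/p) tr_{V₁A}[(1_V ⊗ M^{V₁A} ⊗ 1_B)(Φ+^{VV₁} ⊗ ρ^{AB})], an operator on V ⊗ H_B. Then ρ' is a positive semidefinite operator of trace one, and tr_{VA'}[(M' ⊗ 1_B)(ω ⊗ ρ)] = d² p · tr_{VV'}[(Φ+^{VV'} ⊗ 1_B)(ω ⊗ ρ')], i.e. every element of a teleportation assemblage arising from measurement M on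 state ρ also arises, up to the factor d² p, by projecting onto the maximally entangled state Φ+ applied to the state ρ'. -/
/-! Contracting `M` against one half of `Φ+` partially transposes it (the transpose trick), so the
unnormalised `ρ'` is `d⁻¹` times the channel operator of the partial transpose of `M` applied to `ρ`,
and its trace is `p`. That operator is positive: with `M = C⋆C` and `ρ = D⋆D` it factors as `F F⋆`.
Projecting `ω ⊗ ρ'` onto `Φ+` undoes the transpose once more and returns the assemblage element of
`M`, up to the factor `(d² p)⁻¹`. -/

open Matrix ComplexOrder
open scoped Kronecker

namespace Tele

theorem trace_ptraceV₁A {V V₁ A B : Type*} [Fintype V] [Fintype V₁] [Fintype A] [Fintype B]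
    (X : Matrix (V × V₁ × A × B) (V × V₁ × A × B) ℂ) : (ptraceV₁A X).trace = X.trace := by
  simp only [Matrix.trace, Matrix.diag, ptraceV₁A, Matrix.of_apply, Fintype.sum_prod_type]
  exact Finset.sum_congr rfl fun _ _ => Finset.sum_comm.trans
    (Finset.sum_congr rfl fun _ _ => Finset.sum_comm)

theorem chanOp_ptranspose₁_apply {V A B : Type*} [Fintype V] [Fintype A] [Fintype B]
    [DecidableEq V] [DecidableEq B]
    (M : Matrix (V × A) (V × A) ℂ) (ρ : Matrix (A × B) (A × B) ℂ) (v v' : V) (b b' : B) :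
    chanOp (ptranspose₁ M) ρ (v, b) (v', b') = ∑ a, ∑ c, M (v', a) (v, c) * ρ (c, b) (a, b') := by
  simp [chanOp, ptraceMid, ptranspose₁, Matrix.mul_apply, Fintype.sum_prod_type,
    Matrix.one_apply, mul_ite, ite_mul]

open scoped MatrixOrder in
/-- Writing `M = C⋆C` and `ρ = D⋆D`, the matrix is `F F⋆` for
`F (v, b) (k, j) = ∑ c, C k (v, c) * conj (D j (c, b))`. -/
theorem posSemidef_chanOp_ptranspose₁ {V A B : Type*} [Fintype V] [Fintype A] [Fintype B]
    [DecidableEq V] [DecidableEq B]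
    {M : Matrix (V × A) (V × A) ℂ} (hM : M.PosSemidef) {ρ : Matrix (A × B) (A × B) ℂ}
    (hρ : ρ.PosSemidef) : (chanOp (ptranspose₁ M) ρ).PosSemidef := by
  classical
  obtain ⟨C, rfl⟩ := CStarAlgebra.nonneg_iff_eq_star_mul_self.mp hM.nonneg
  obtain ⟨D, rfl⟩ := CStarAlgebra.nonneg_iff_eq_star_mul_self.mp hρ.nonneg
  let F : Matrix (V × B) ((V × A) × (A × B)) ℂ :=
    Matrix.of fun x k => ∑ c, C k.1 (x.1, c) * star (D k.2 (c, x.2))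
  convert Matrix.posSemidef_self_mul_conjTranspose F
  ext ⟨v, b⟩ ⟨v', b'⟩
  simp only [chanOp_ptranspose₁_apply, F, star_eq_conjTranspose, Matrix.mul_apply,
    Matrix.conjTranspose_apply, Matrix.of_apply, star_sum, star_mul', star_star, Finset.sum_mul_sum]
  rw [Fintype.sum_prod_type]
  simp only [Finset.sum_comm (γ := A) (α := V × A), Finset.sum_comm (γ := A) (α := A × B)]
  exact Fintype.sum_congr _ _ fun k => Fintype.sum_congr _ _ fun j => Finset.sum_comm.trans <|
    Fintype.sum_congr _ _ fun c => Fintype.sum_congr _ _ fun a => by ring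

theorem ptraceV₁A_maxEnt (d : ℕ) {A B : Type*} [Fintype A] [Fintype B] [DecidableEq B]
    (M : Matrix (Fin d × A) (Fin d × A) ℂ) (ρ : Matrix (A × B) (A × B) ℂ) :
    ptraceV₁A (((1 : Matrix (Fin d) (Fin d) ℂ) ⊗ₖ
          (Matrix.reindex (Equiv.prodAssoc (Fin d) A B) (Equiv.prodAssoc (Fin d) A B)
            (M ⊗ₖ (1 : Matrix B B ℂ)))) *
        (Matrix.reindex (Equiv.prodAssoc (Fin d) (Fin d) (A × B))
          (Equiv.prodAssoc (Fin d) (Fin d) (A × B)) (maxEnt d ⊗ₖ ρ)))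
      = (d : ℂ)⁻¹ • chanOp (ptranspose₁ M) ρ := by
  ext ⟨v, b⟩ ⟨v', b'⟩
  simp [ptraceV₁A, chanOp, ptraceMid, ptranspose₁, maxEnt, Matrix.mul_apply,
    Fintype.sum_prod_type, Matrix.one_apply, ite_and, mul_ite, ite_mul, Finset.mul_sum,
    mul_left_comm]

theorem teleA_maxEnt_chanOp_ptranspose₁ (d : ℕ) {A B : Type*} [Fintype A] [Fintype B]
    [DecidableEq B] (M : Matrix (Fin d × A) (Fin d × A) ℂ) (ρ : Matrix (A × B) (A × B) ℂ)
    (ω : Matrix (Fin d) (Fin d) ℂ) :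
    teleA (maxEnt d) (chanOp (ptranspose₁ M) ρ) ω = (d : ℂ)⁻¹ • teleA M ρ ω := by
  ext b b'
  simp only [teleA, ptraceVA, maxEnt, ite_and, reindex_apply, chanOp, ptraceMid, ptranspose₁,
    Matrix.mul_apply, submatrix_apply, Equiv.prodAssoc_symm_apply, kroneckerMap_apply, of_apply,
    Matrix.one_apply, mul_ite, mul_one, mul_zero, ite_mul, one_mul, zero_mul, Fintype.sum_prod_type,
    Finset.sum_ite_irrel, Finset.sum_ite_eq, Finset.mem_univ, ↓reduceIte, Finset.sum_const_zero,
    Finset.sum_ite_eq', Finset.mul_sum, mul_left_comm, Matrix.smul_apply, smul_eq_mul]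
  exact Finset.sum_congr rfl fun _ _ => Finset.sum_comm

theorem teleA_smul {V A B : Type*} [Fintype V] [Fintype A] [Fintype B] [DecidableEq B]
    (M : Matrix (V × A) (V × A) ℂ) (c : ℂ) (ρ : Matrix (A × B) (A × B) ℂ) (ω : Matrix V V ℂ) :
    teleA M (c • ρ) ω = c • teleA M ρ ω := by
  ext b b'
  simp [teleA, ptraceVA, Matrix.kronecker_smul, Matrix.mul_smul, Finset.mul_sum]

theorem local_entanglement_swapping_general (d : ℕ) {A B : Type*}
    [Fintype A] [Fintype B] [DecidableEq B]
    (M : Matrix (Fin d × A) (Fin d × A) ℂ) (hM : M.PosSemidef)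
    (ρ : Matrix (A × B) (A × B) ℂ) (hρ : IsState ρ)
    (ω : Matrix (Fin d) (Fin d) ℂ)
    (p : ℂ)
    (hp : p = (((1 : Matrix (Fin d) (Fin d) ℂ) ⊗ₖ
          (Matrix.reindex (Equiv.prodAssoc (Fin d) A B) (Equiv.prodAssoc (Fin d) A B)
            (M ⊗ₖ (1 : Matrix B B ℂ)))) *
        (Matrix.reindex (Equiv.prodAssoc (Fin d) (Fin d) (A × B))
          (Equiv.prodAssoc (Fin d) (Fin d) (A × B)) (maxEnt d ⊗ₖ ρ))).trace)
    (hppos : 0 < p)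
    (ρ' : Matrix (Fin d × B) (Fin d × B) ℂ)
    (hρ' : ρ' = p⁻¹ • ptraceV₁A (((1 : Matrix (Fin d) (Fin d) ℂ) ⊗ₖ
          (Matrix.reindex (Equiv.prodAssoc (Fin d) A B) (Equiv.prodAssoc (Fin d) A B)
            (M ⊗ₖ (1 : Matrix B B ℂ)))) *
        (Matrix.reindex (Equiv.prodAssoc (Fin d) (Fin d) (A × B))
          (Equiv.prodAssoc (Fin d) (Fin d) (A × B)) (maxEnt d ⊗ₖ ρ)))) :
    ρ'.PosSemidef ∧ ρ'.trace = 1 ∧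
      teleA M ρ ω = ((d : ℂ) ^ 2 * p) • teleA (maxEnt d) ρ' ω := by
  rw [← trace_ptraceV₁A, ptraceV₁A_maxEnt] at hp
  rw [ptraceV₁A_maxEnt] at hρ'
  have hp0 : p ≠ 0 := hppos.ne'
  have hd0 : (d : ℂ) ≠ 0 := fun hd => hp0 (by simp [hp, hd])
  refine ⟨?_, ?_, ?_⟩
  · rw [hρ']
    exact ((posSemidef_chanOp_ptranspose₁ hM hρ.1).smul
      (inv_nonneg.2 (Nat.cast_nonneg d))).smul (inv_nonneg.2 hppos.le)
  · rw [hρ', trace_smul, ← hp, smul_eq_mul, inv_mul_cancel₀ hp0]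
  · rw [hρ', teleA_smul, teleA_smul, teleA_maxEnt_chanOp_ptranspose₁, smul_smul, smul_smul,
      smul_smul]
    have hscalar : (d : ℂ) ^ 2 * p * p⁻¹ * (d : ℂ)⁻¹ * (d : ℂ)⁻¹ = 1 := by field_simp
    rw [hscalar, one_smul]

/-- local entanglement-swapping lemma: the post-measurement operator ρ' is a
state, and the assemblage element from (M, ρ) equals d²p times the one from (Φ+, ρ'). -/
theorem local_entanglement_swapping (d : ℕ) (hd : 1 ≤ d) {A B : Type*}
    [Fintype A] [Fintype B] [DecidableEq A] [DecidableEq B]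
    (M : Matrix (Fin d × A) (Fin d × A) ℂ) (hM : M.PosSemidef)
    (ρ : Matrix (A × B) (A × B) ℂ) (hρ : IsState ρ)
    (ω : Matrix (Fin d) (Fin d) ℂ) (hω : IsState ω)
    (p : ℂ)
    (hp : p = (((1 : Matrix (Fin d) (Fin d) ℂ) ⊗ₖ
          (Matrix.reindex (Equiv.prodAssoc (Fin d) A B) (Equiv.prodAssoc (Fin d) A B)
            (M ⊗ₖ (1 : Matrix B B ℂ)))) *
        (Matrix.reindex (Equiv.prodAssoc (Fin d) (Fin d) (A × B))
          (Equiv.prodAssoc (Fin d) (Fin d) (A × B)) (maxEnt d ⊗ₖ ρ))).trace)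
    (hppos : 0 < p)
    (ρ' : Matrix (Fin d × B) (Fin d × B) ℂ)
    (hρ' : ρ' = p⁻¹ • ptraceV₁A (((1 : Matrix (Fin d) (Fin d) ℂ) ⊗ₖ
          (Matrix.reindex (Equiv.prodAssoc (Fin d) A B) (Equiv.prodAssoc (Fin d) A B)
            (M ⊗ₖ (1 : Matrix B B ℂ)))) *
        (Matrix.reindex (Equiv.prodAssoc (Fin d) (Fin d) (A × B))
          (Equiv.prodAssoc (Fin d) (Fin d) (A × B)) (maxEnt d ⊗ₖ ρ)))) :
    ρ'.PosSemidef ∧ ρ'.trace = 1 ∧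
      teleA M ρ ω = ((d : ℂ) ^ 2 * p) • teleA (maxEnt d) ρ' ω :=
  local_entanglement_swapping_general d M hM ρ hρ ω p hp hppos ρ' hρ'

end Tele
end

section
/- Let {σ_{a|ω_x}} be the teleportation assemblage arising from a shared state ρ^{AB}, a POVM {M_a^{VA}}, and input states {ω_x}. Let ν be the optimal value of the following optimization: minimize Σ_a tr[σ⁻_{a|ω_x}] over positive semidefinite operators M*_{a,±} on V ⊗ H_B and Hermitian operators ρ_± on H_B, subject to σ_{a|ω_x} = σ⁺_{a|ω_x} − σ⁻_{a|ω_x} and σ^±_{a|ω_x} = tr_V[M*_{a,±}(ω_x ⊗ 1_B)] for all a, x, and Σ_a M*_{a,±} = 1_V ⊗ ρ_±. Then ν ≤ N(ρ^{AB}); that is, the optimal value of this optimization is a lower bound on the entanglement negativity of the shared state. -/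
open Matrix ComplexOrder
open scoped Kronecker

namespace Tele

/-!
Write `ρ = ρ₊ - ρ₋` with `ρ₊^{T_A}, ρ₋^{T_A} ≥ 0`. The teleportation assemblage is
`σ_{a|ω} = tr_V[(M_a ∗ ρ^{T_A})(ω ⊗ 1_B)]`, where `∗` is the link product, and the link product
of positive operators is positive. Hence `M*_{a,±} := M_a ∗ ρ_±^{T_A}` is feasible for the
program: completeness of the POVM gives `∑_a M*_{a,±} = 1_V ⊗ tr_A ρ_±`, and the objective is
`tr ρ₋`. So every value in the set whose infimum is `N(ρ)` is a value of the program. These values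
are nonnegative, which settles the comparison of infima without showing that the program is
bounded below (`sInf` of a set of reals unbounded below is `0`).
-/
lemma _root_.Real.sInf_le_sInf_of_subset_of_nonneg {s t : Set ℝ} (ht : t.Nonempty)
    (hts : t ⊆ s) (ht₀ : ∀ x ∈ t, 0 ≤ x) : sInf s ≤ sInf t := by
  refine le_csInf ht fun x hx => ?_
  by_cases hs : BddBelow s
  · exact csInf_le hs (hts hx)
  · rw [Real.sInf_of_not_bddBelow hs]
    exact ht₀ x hx

lemma exists_posSemidef_sub_posSemidef {n : Type*} [Fintype n] [DecidableEq n]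
    {H : Matrix n n ℂ} (hH : H.IsHermitian) :
    ∃ P N : Matrix n n ℂ, P.PosSemidef ∧ N.PosSemidef ∧ H = P - N := by
  open scoped MatrixOrder Matrix.Norms.L2Operator in
  obtain ⟨P, N, hP, hN, rfl⟩ := hH.isSelfAdjoint.exists_nonneg_sub_nonneg
  exact ⟨P, N, hP.posSemidef, hN.posSemidef, rfl⟩

section PartialTrace

variable {V B : Type*}

lemma ptranspose₁_ptranspose₁ (X : Matrix (V × B) (V × B) ℂ) :
    ptranspose₁ (ptranspose₁ X) = X := rfl

lemma ptranspose₁_sub (X Y : Matrix (V × B) (V × B) ℂ) :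
    ptranspose₁ (X - Y) = ptranspose₁ X - ptranspose₁ Y := rfl

lemma isHermitian_ptranspose₁ {X : Matrix (V × B) (V × B) ℂ} (hX : X.IsHermitian) :
    (ptranspose₁ X).IsHermitian := by
  ext p q
  exact hX.apply (q.1, p.2) (p.1, q.2)

variable [Fintype V]

lemma ptrace₁_ptranspose₁ (X : Matrix (V × B) (V × B) ℂ) :
    ptrace₁ (ptranspose₁ X) = ptrace₁ X := rfl

lemma ptrace₁_sub (X Y : Matrix (V × B) (V × B) ℂ) :
    ptrace₁ (X - Y) = ptrace₁ X - ptrace₁ Y := by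
  ext b b'
  simp [ptrace₁, Finset.sum_sub_distrib]

lemma isHermitian_ptrace₁ {X : Matrix (V × B) (V × B) ℂ} (hX : X.IsHermitian) :
    (ptrace₁ X).IsHermitian := by
  ext b b'
  simp only [conjTranspose_apply, ptrace₁, of_apply, star_sum]
  exact Finset.sum_congr rfl fun v _ => hX.apply (v, b) (v, b')

variable [Fintype B]

lemma trace_ptranspose₁ (X : Matrix (V × B) (V × B) ℂ) :
    (ptranspose₁ X).trace = X.trace := rfl

lemma trace_ptrace₁ (X : Matrix (V × B) (V × B) ℂ) : (ptrace₁ X).trace = X.trace := by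
  simp only [trace, ptrace₁, diag, of_apply, Fintype.sum_prod_type]
  exact Finset.sum_comm

end PartialTrace

section LinkProduct

variable {V A B : Type*} [Fintype A]

/-- The link product `tr_A[(M^{T_A} ⊗ 1_B)(1_V ⊗ X)]` of `M` on `V ⊗ A` and `X` on `A ⊗ B`. -/
def linkProduct (M : Matrix (V × A) (V × A) ℂ) (X : Matrix (A × B) (A × B) ℂ) :
    Matrix (V × B) (V × B) ℂ :=
  Matrix.of fun p q => ∑ α, ∑ α', M (p.1, α) (q.1, α') * X (α, p.2) (α', q.2)

lemma linkProduct_sub_right (M : Matrix (V × A) (V × A) ℂ) (X Y : Matrix (A × B) (A × B) ℂ) :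
    linkProduct M (X - Y) = linkProduct M X - linkProduct M Y := by
  ext p q
  simp [linkProduct, mul_sub, Finset.sum_sub_distrib]

lemma sum_linkProduct {ι : Type*} [Fintype ι] (M : ι → Matrix (V × A) (V × A) ℂ)
    (X : Matrix (A × B) (A × B) ℂ) :
    ∑ i, linkProduct (M i) X = linkProduct (∑ i, M i) X := by
  ext p q
  simp only [linkProduct, Matrix.sum_apply, of_apply, Finset.sum_mul]
  rw [Finset.sum_comm]
  exact Finset.sum_congr rfl fun α _ => Finset.sum_comm

lemma one_linkProduct [DecidableEq V] [DecidableEq A] (X : Matrix (A × B) (A × B) ℂ) :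
    linkProduct (1 : Matrix (V × A) (V × A) ℂ) X = 1 ⊗ₖ ptrace₁ X := by
  ext ⟨v, b⟩ ⟨v', b'⟩
  by_cases h : v = v'
  · subst h
    simp [linkProduct, ptrace₁, one_apply]
  · simp [linkProduct, one_apply, h]

lemma linkProduct_eq_conjTranspose_mul_kronecker_mul [Fintype V] [Fintype B]
    [DecidableEq V] [DecidableEq A] [DecidableEq B]
    (M : Matrix (V × A) (V × A) ℂ) (X : Matrix (A × B) (A × B) ℂ) :
    linkProduct M X =
      (Matrix.of fun (j : (V × A) × (A × B)) (p : V × B) =>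
          if j.1.1 = p.1 ∧ j.1.2 = j.2.1 ∧ j.2.2 = p.2 then (1 : ℂ) else 0)ᴴ *
        (M ⊗ₖ X) *
      Matrix.of fun (j : (V × A) × (A × B)) (p : V × B) =>
          if j.1.1 = p.1 ∧ j.1.2 = j.2.1 ∧ j.2.2 = p.2 then (1 : ℂ) else 0 := by
  ext ⟨v, b⟩ ⟨v', b'⟩
  simp only [linkProduct, of_apply, ite_and, mul_apply, conjTranspose_apply, RCLike.star_def,
    apply_ite (starRingEnd ℂ), map_one, map_zero, kroneckerMap_apply, ite_mul, one_mul,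
    zero_mul, Fintype.sum_prod_type, Finset.sum_ite_irrel, Finset.sum_ite_eq', Finset.mem_univ,
    ↓reduceIte, Finset.sum_const_zero, Finset.sum_ite_eq, mul_ite, mul_one, mul_zero]
  exact Finset.sum_comm

lemma posSemidef_linkProduct [Fintype V] [Fintype B]
    {M : Matrix (V × A) (V × A) ℂ} {X : Matrix (A × B) (A × B) ℂ}
    (hM : M.PosSemidef) (hX : X.PosSemidef) : (linkProduct M X).PosSemidef := by
  classical
  rw [linkProduct_eq_conjTranspose_mul_kronecker_mul]
  exact (hM.kronecker hX).conjTranspose_mul_mul_same _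

lemma teleA_eq_ptrace₁_linkProduct [Fintype V] [Fintype B] [DecidableEq B]
    (M : Matrix (V × A) (V × A) ℂ) (ρ : Matrix (A × B) (A × B) ℂ) (ω : Matrix V V ℂ) :
    teleA M ρ ω = ptrace₁ (linkProduct M (ptranspose₁ ρ) * (ω ⊗ₖ (1 : Matrix B B ℂ))) := by
  ext b b'
  simp only [teleA, ptraceVA, reindex_apply, mul_apply, submatrix_apply,
    Equiv.prodAssoc_symm_apply, kroneckerMap_apply, one_apply, mul_ite, mul_one, mul_zero, ite_mul,
    zero_mul, Fintype.sum_prod_type, Finset.sum_ite_eq, Finset.mem_univ, ↓reduceIte, of_apply,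
    ptrace₁, linkProduct, ptranspose₁, Finset.sum_mul, Finset.sum_ite_eq']
  refine Finset.sum_congr rfl fun v _ => Finset.sum_comm.trans ?_
  exact Finset.sum_congr rfl fun v' _ => Finset.sum_congr rfl fun α _ =>
    Finset.sum_congr rfl fun α' _ => by ring

end LinkProduct

section Negativity

variable {A B : Type*} [Fintype A] [Fintype B]

lemma exists_eq_sub_posSemidef_ptranspose₁ [DecidableEq A] [DecidableEq B]
    {ρ : Matrix (A × B) (A × B) ℂ} (hρ : ρ.IsHermitian) :
    ∃ ρp ρm : Matrix (A × B) (A × B) ℂ,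
      ρ = ρp - ρm ∧ (ptranspose₁ ρp).PosSemidef ∧ (ptranspose₁ ρm).PosSemidef := by
  obtain ⟨P, N, hP, hN, hPN⟩ := exists_posSemidef_sub_posSemidef (isHermitian_ptranspose₁ hρ)
  exact ⟨ptranspose₁ P, ptranspose₁ N, by rw [← ptranspose₁_sub, ← hPN]; rfl, hP, hN⟩

lemma re_trace_nonneg_of_posSemidef_ptranspose₁ {ρ : Matrix (A × B) (A × B) ℂ}
    (hρ : (ptranspose₁ ρ).PosSemidef) : 0 ≤ ρ.trace.re :=
  (Complex.nonneg_iff.mp (trace_ptranspose₁ ρ ▸ hρ.trace_nonneg)).1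

end Negativity

theorem negativity_lower_bound_general {A B ι X : Type*}
    [Fintype A] [Fintype B] [Fintype ι] [DecidableEq A] [DecidableEq B]
    (d : ℕ)
    (ρ : Matrix (A × B) (A × B) ℂ) (hρ : IsState ρ)
    (M : ι → Matrix (Fin d × A) (Fin d × A) ℂ)
    (hM : ∀ a, (M a).PosSemidef) (hMsum : (∑ a, M a) = 1)
    (ω : X → Matrix (Fin d) (Fin d) ℂ) :
    sInf {t : ℝ | ∃ (Mp Mm : ι → Matrix (Fin d × B) (Fin d × B) ℂ) (ρp ρm : Matrix B B ℂ),
        (∀ a, (Mp a).PosSemidef) ∧ (∀ a, (Mm a).PosSemidef) ∧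
        ρp.IsHermitian ∧ ρm.IsHermitian ∧
        (∀ a x, teleA (M a) ρ (ω x) =
          ptrace₁ (Mp a * (ω x ⊗ₖ (1 : Matrix B B ℂ))) -
            ptrace₁ (Mm a * (ω x ⊗ₖ (1 : Matrix B B ℂ)))) ∧
        (∑ a, Mp a) = (1 : Matrix (Fin d) (Fin d) ℂ) ⊗ₖ ρp ∧
        (∑ a, Mm a) = (1 : Matrix (Fin d) (Fin d) ℂ) ⊗ₖ ρm ∧
        t = (ρm.trace).re} ≤ negativity ρ := by
  obtain ⟨ρp₀, ρm₀, hρ₀, hp₀, hm₀⟩ := exists_eq_sub_posSemidef_ptranspose₁ hρ.1.isHermitian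
  refine Real.sInf_le_sInf_of_subset_of_nonneg ⟨_, ρp₀, ρm₀, hρ₀, hp₀, hm₀, rfl⟩ ?_ ?_
  · rintro t ⟨ρp, ρm, rfl, hp, hm, rfl⟩
    refine ⟨fun a => linkProduct (M a) (ptranspose₁ ρp),
      fun a => linkProduct (M a) (ptranspose₁ ρm), ptrace₁ ρp, ptrace₁ ρm,
      fun a => posSemidef_linkProduct (hM a) hp, fun a => posSemidef_linkProduct (hM a) hm,
      ptrace₁_ptranspose₁ ρp ▸ isHermitian_ptrace₁ hp.isHermitian,
      ptrace₁_ptranspose₁ ρm ▸ isHermitian_ptrace₁ hm.isHermitian,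
      fun a x => ?_, ?_, ?_, by rw [trace_ptrace₁]⟩
    · rw [teleA_eq_ptrace₁_linkProduct, ptranspose₁_sub, linkProduct_sub_right, Matrix.sub_mul,
        ptrace₁_sub]
    · rw [sum_linkProduct, hMsum, one_linkProduct, ptrace₁_ptranspose₁]
    · rw [sum_linkProduct, hMsum, one_linkProduct, ptrace₁_ptranspose₁]
  · rintro t ⟨-, ρm, -, -, hm, rfl⟩
    exact re_trace_nonneg_of_posSemidef_ptranspose₁ hm

/-- the optimal value of the negativity-estimation SDP over the teleportation
data is a lower bound on the entanglement negativity of the shared state. -/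
theorem negativity_lower_bound {A B ι X : Type*}
    [Fintype A] [Fintype B] [Fintype ι] [DecidableEq A] [DecidableEq B]
    (d : ℕ) (hd : 1 ≤ d)
    (ρ : Matrix (A × B) (A × B) ℂ) (hρ : IsState ρ)
    (M : ι → Matrix (Fin d × A) (Fin d × A) ℂ)
    (hM : ∀ a, (M a).PosSemidef) (hMsum : (∑ a, M a) = 1)
    (ω : X → Matrix (Fin d) (Fin d) ℂ) (hω : ∀ x, IsState (ω x)) :
    sInf {t : ℝ | ∃ (Mp Mm : ι → Matrix (Fin d × B) (Fin d × B) ℂ) (ρp ρm : Matrix B B ℂ),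
        (∀ a, (Mp a).PosSemidef) ∧ (∀ a, (Mm a).PosSemidef) ∧
        ρp.IsHermitian ∧ ρm.IsHermitian ∧
        (∀ a x, teleA (M a) ρ (ω x) =
          ptrace₁ (Mp a * (ω x ⊗ₖ (1 : Matrix B B ℂ))) -
            ptrace₁ (Mm a * (ω x ⊗ₖ (1 : Matrix B B ℂ)))) ∧
        (∑ a, Mp a) = (1 : Matrix (Fin d) (Fin d) ℂ) ⊗ₖ ρp ∧
        (∑ a, Mm a) = (1 : Matrix (Fin d) (Fin d) ℂ) ⊗ₖ ρm ∧
        t = (ρm.trace).re} ≤ negativity ρ :=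
  negativity_lower_bound_general d ρ hρ M hM hMsum ω

end Tele
end
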